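/- arXiv:1810.04288 — 3 statements merged into one kernel-verified Lean document; each statement's English description precedes it below -/
import Mathlib

section
/- Let (P, ≤) be a partial order that is strongly atomic and satisfies the local ascending chain condition. Then for any p, q ∈ P with p < q, there is a finite sequence p = p₀ < p₁ < ⋯ < pₙ = q such that for every i < n the open interval (pᵢ, pᵢ₊₁) is empty, i.e., there is no element r with pᵢ < r < pᵢ₊₁. -/
/-- A partial order satisfies the *local ascending chain condition* if every
monotone sequence that is bounded above by some element is eventually constant. -/
def LocalACC (P : Type*) [PartialOrder P] : Prop :=
  ∀ p : P, ∀ f : ℕ → P, Monotone f → (∀ n, f n ≤ p) →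
    ∃ N, ∀ n ≥ N, f n = f (n + 1)

/-- A partial order is *strongly atomic* if whenever `p < q` there is `r` with
`p < r ≤ q` and the open interval `(p, r)` empty. -/
def StronglyAtomicOrder (P : Type*) [PartialOrder P] : Prop :=
  ∀ p q : P, p < q → ∃ r : P, p < r ∧ r ≤ q ∧ ∀ x : P, ¬ (p < x ∧ x < r)

/-! Local ACC makes `>` well-founded on every interval `Iic q`, so one argues by well-founded
induction downwards from `q`: if `p < q`, strong atomicity gives a cover `p ⋖ r ≤ q`, and `p` is
prepended to a covering chain from `r` to `q`. -/

section

variable {P : Type*} [PartialOrder P]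

theorem StronglyAtomicOrder.isStronglyAtomic (h : StronglyAtomicOrder P) :
    IsStronglyAtomic P where
  exists_covBy_le_of_lt p q hpq := by
    obtain ⟨r, hpr, hrq, hempty⟩ := h p q hpq
    exact ⟨r, ⟨hpr, fun x hpx hxr ↦ hempty x ⟨hpx, hxr⟩⟩, hrq⟩

theorem LocalACC.wellFoundedGT_Iic (h : LocalACC P) (q : P) : WellFoundedGT (Set.Iic q) := by
  refine wellFoundedGT_iff_monotone_chain_condition.2 fun f ↦ ?_
  obtain ⟨N, hN⟩ := h q (fun n ↦ f n) (fun m n hmn ↦ f.mono hmn) fun n ↦ (f n).2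
  refine ⟨N, fun m hm ↦ Subtype.ext ?_⟩
  induction m, hm using Nat.le_induction with
  | base => rfl
  | succ m hm ih => exact ih.trans (hN m hm)

theorem exists_covBy_relSeries_of_le [IsStronglyAtomic P] {q : P} [WellFoundedGT (Set.Iic q)]
    {p : P} (hpq : p ≤ q) :
    ∃ s : RelSeries {(a, b) : P × P | a ⋖ b}, s.head = p ∧ s.last = q := by
  suffices ∀ x : Set.Iic q, ∃ s : RelSeries {(a, b) : P × P | a ⋖ b}, s.head = x ∧ s.last = q from
    this ⟨p, hpq⟩
  intro x
  induction x using WellFoundedGT.induction with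
  | ind x ih =>
    obtain ⟨p, hpq⟩ := x
    rcases hpq.eq_or_lt with rfl | hpq
    · exact ⟨RelSeries.singleton _ p, rfl, rfl⟩
    obtain ⟨r, hpr, hrq⟩ := exists_covBy_le_of_lt hpq
    obtain ⟨s, hs, hs'⟩ := ih ⟨r, hrq⟩ hpr.lt
    exact ⟨s.cons p (hs ▸ hpr), by simp, by simp [hs']⟩

end

theorem abstract_factorization {P : Type*} [PartialOrder P]
    (hatomic : StronglyAtomicOrder P) (hacc : LocalACC P)
    {p q : P} (hpq : p < q) :
    ∃ (n : ℕ) (f : Fin (n + 1) → P), f 0 = p ∧ f (Fin.last n) = q ∧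
      (∀ i : Fin n, f i.castSucc < f i.succ) ∧
      (∀ i : Fin n, ∀ r : P, ¬ (f i.castSucc < r ∧ r < f i.succ)) := by
  have := hatomic.isStronglyAtomic
  have := hacc.wellFoundedGT_Iic q
  obtain ⟨s, rfl, rfl⟩ := exists_covBy_relSeries_of_le hpq.le
  have hcov (i : Fin s.length) : s i.castSucc ⋖ s i.succ := s.step i
  exact ⟨s.length, s, rfl, rfl, fun i ↦ (hcov i).lt, fun i r hr ↦ (hcov i).2 hr.1 hr.2⟩
end

section
/- Let (P, ≤) be a join-semilattice (every pair of elements has a least upper bound) satisfying the local ascending chain condition. Then every nonempty subset S ⊆ P that has at least one lower bound has a greatest lower bound in P. Moreover, this greatest lower bound is the maximum element of the set B = {p ∈ P : p ≤ q for all q ∈ S} of lower bounds of S. -/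
/-!
The local ascending chain condition makes `>` well-founded on every set that is bounded above,
so the set of lower bounds of `S`, bounded above by any element of `S`, has a maximal element.
The set of lower bounds is closed under `⊔`, and a maximal element `m` of a `⊔`-closed set
dominates every `x` in it, since `m ≤ m ⊔ x` forces `m ⊔ x = m`.
-/

theorem LocalACC.wellFoundedOn_of_bddAbove {P : Type*} [PartialOrder P] (hacc : LocalACC P)
    {s : Set P} (hs : BddAbove s) : s.WellFoundedOn (· > ·) := by
  obtain ⟨p, hp⟩ := hs
  refine Set.wellFoundedOn_iff_no_descending_seq.2 fun f hf => ?_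
  have hf_lt : ∀ n, f n < f (n + 1) := fun n => f.map_rel_iff.2 n.lt_succ_self
  obtain ⟨N, hN⟩ := hacc p f (monotone_nat_of_le_succ fun n => (hf_lt n).le) fun n => hp (hf n)
  exact (hf_lt N).ne (hN N le_rfl)

theorem SupClosed.isGreatest_of_maximal {P : Type*} [SemilatticeSup P] {s : Set P} {m : P}
    (hs : SupClosed s) (hm : Maximal (· ∈ s) m) : IsGreatest s m :=
  ⟨hm.1, fun _ hx => le_sup_right.trans (hm.2 (hs hm.1 hx) le_sup_left)⟩

theorem LocalACC.exists_isGreatest_of_supClosed {P : Type*} [SemilatticeSup P]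
    (hacc : LocalACC P) {s : Set P} (hs : SupClosed s) (hne : s.Nonempty) (hbdd : BddAbove s) :
    ∃ m, IsGreatest s m :=
  let ⟨m, hm⟩ := (hacc.wellFoundedOn_of_bddAbove hbdd).exists_maximal hne
  ⟨m, hs.isGreatest_of_maximal hm⟩

theorem supClosed_lowerBounds {P : Type*} [SemilatticeSup P] (S : Set P) :
    SupClosed (lowerBounds S) :=
  fun _ ha _ hb _ hx => sup_le (ha hx) (hb hx)

/-- In an upper semilattice with the local ascending chain condition, every
nonempty set of elements admitting a lower bound has a greatest lower bound,
which is moreover the maximum of the set of lower bounds. -/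
theorem semilattice_localACC_glb
    {P : Type*} [SemilatticeSup P] (hacc : LocalACC P)
    (S : Set P) (hS : S.Nonempty) (hbd : (lowerBounds S).Nonempty) :
    ∃ b₀ : P, IsGLB S b₀ ∧ IsGreatest (lowerBounds S) b₀ := by
  obtain ⟨b₀, hb₀⟩ :=
    hacc.exists_isGreatest_of_supClosed (supClosed_lowerBounds S) hbd hS.bddAbove_lowerBounds
  exact ⟨b₀, hb₀, hb₀⟩
end

section
/- The parameter order is a well-order. Precisely: consider the set of parameters, i.e., finite strictly decreasing lists of ordinals, ordered by the lexicographic order on lists (comparing entries from the first position at which they differ, with a proper initial segment counted as smaller than any extension, i.e., List.Lex of the order < on ordinals). This order is a linear order on the set of strictly decreasing lists of ordinals, and it is well-founded; hence it is a well-order. (Note that the restriction to strictly decreasing lists is essential: the lexicographic order on arbitrary finite lists of ordinals is not well-founded.) -/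
/-- A *parameter* is a finite strictly decreasing sequence of ordinals,
represented as a list in which each entry is strictly greater than the next. -/
def Parameter : Type _ :=
  {l : List Ordinal // l.Chain' (· > ·)}

/-- The *parameter order*: the lexicographic order on parameters. -/
def ParameterLt (p q : Parameter) : Prop :=
  List.Lex (· < ·) p.val q.val

/- Well-foundedness is the instance built on `WellFounded.list_chain'` (induction on the head of a
decreasing chain, then on its tail). -/
instance List.isWellOrder_lex_chains {α : Type*} {r : α → α → Prop} [IsWellOrder α r] :
    IsWellOrder (List.chains r) (List.lex_chains r) where
  toTrichotomous := InvImage.trichotomous Subtype.val_injective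

/-- The parameter order is a well-order on the set of strictly decreasing
lists of ordinals: it is a (strict) linear order and it is well-founded. -/
theorem parameter_order_is_wellorder : IsWellOrder Parameter ParameterLt :=
  List.isWellOrder_lex_chains (r := (· < · : Ordinal → Ordinal → Prop))
end
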